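/- Let N ≥ 1, a_i > 0 with Σ_{i=1}^N a_i = 1, and x_i ∈ X pairwise distinct; set μ̄ := Σ_{i=1}^N a_i δ_{x_i}. Let μ: [0,+∞) → P₂(X) with μ(0) = μ̄ be such that the cardinality of supp(μ_t) is finite for every t ≥ 0 and non-increasing in t. Assume η ∈ P(C([0,+∞);X)) satisfies (e_t)_♯η = μ_t for every t ≥ 0. Then η = Σ_{i=1}^N a_i δ_{γ_i} for continuous curves γ_i ∈ C([0,+∞);X) satisfying: (P1) γ_i ≠ γ_j for i ≠ j; (P2) γ_i(0) = x_i for every i = 1,…,N; (P3) if γ_i(s) = γ_j(s) for some s ≥ 0 and some i ≠ j, then γ_i(t) = γ_j(t) for every t ≥ s. -/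

import Mathlib

open MeasureTheory ProbabilityTheory
open scoped ENNReal

variable {X : Type*} [NormedAddCommGroup X] [InnerProductSpace ℝ X]
  [CompleteSpace X] [SecondCountableTopology X] [MeasurableSpace X] [BorelSpace X]

/-- Membership in the Wasserstein space `P₂(Y)`. -/
def MemP2 {Y : Type*} [NormedAddCommGroup Y] [MeasurableSpace Y] (μ : Measure Y) : Prop :=
  IsProbabilityMeasure μ ∧ Integrable (fun y => ‖y‖ ^ 2) μ

/-- The topological support of a measure. -/
def msupport {α : Type*} [TopologicalSpace α] [MeasurableSpace α] (μ : Measure α) :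
    Set α :=
  {x | ∀ U : Set α, IsOpen U → x ∈ U → 0 < μ U}

/-! Two curves charged by `η` that meet can never separate again. At the last meeting time `v`,
every atom of `μ v` still carries mass nearby just after `v`, because continuity of the curves
makes `t ↦ μ t U` lower semicontinuous for open `U`; two curves leaving the common point would
then produce one more atom, contradicting the monotonicity of the number of atoms. Hence
`η`-almost every curve is determined by its starting point, and `η` is the image of `μ̄` under
`xᵢ ↦ γᵢ`. -/

open Set Metric Filter Topology

theorem msupport_eq_support {α : Type*} [TopologicalSpace α] [MeasurableSpace α]
    (μ : Measure α) : msupport μ = μ.support := by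
  ext x
  simp only [msupport, Measure.support_eq_forall_isOpen, mem_ofPred_eq]
  exact forall_congr' fun U => ⟨fun h hx hU => h hU hx, fun h hU hx => h hx hU⟩

theorem Set.Finite.exists_pos_pairwiseDisjoint_ball {E : Type*} [MetricSpace E] {s : Set E}
    (hs : s.Finite) : ∃ ε > 0, s.PairwiseDisjoint (ball · ε) := by
  have hsep : ∀ᶠ ε in 𝓝[>] (0:ℝ), ∀ ab ∈ s.offDiag, ε + ε ≤ dist ab.1 ab.2 := by
    rw [hs.offDiag.eventually_all]
    rintro ⟨a, b⟩ ⟨-, -, hab⟩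
    have : 0 < dist a b / 2 := half_pos (dist_pos.2 hab)
    filter_upwards [Ioo_mem_nhdsGT this] with ε hε
    linarith [hε.2]
  obtain ⟨ε, hε, hε0⟩ := (hsep.and self_mem_nhdsWithin).exists
  exact ⟨ε, hε0, fun a ha b hb hab => ball_disjoint_ball (hε (a, b) ⟨ha, hb, hab⟩)⟩

theorem ncard_lt_ncard_of_split {E : Type*} [PseudoMetricSpace E] {S S' : Set E}
    (hS' : S'.Finite) {p y y' : E} {ε : ℝ} (hdisj : (insert p S).PairwiseDisjoint (ball · ε))
    (hcover : ∀ q ∈ S, (ball q ε ∩ S').Nonempty) (hy : y ∈ ball p ε ∩ S')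
    (hy' : y' ∈ ball p ε ∩ S') (hne : y ≠ y') : S.ncard < S'.ncard := by
  classical
  choose! w hw using hcover
  let f : E → E := fun q => if q = p then y else w q
  have hf : ∀ q ∈ insert p S, f q ∈ ball q ε ∩ S' := by
    intro q hq
    by_cases hqp : q = p
    · subst hqp; simpa [f] using hy
    · simpa [f, hqp] using hw q (hq.resolve_left hqp)
  have hfy' : ∀ q ∈ insert p S, f q ≠ y' := by
    intro q hq hqy
    obtain rfl : q = p := hdisj.elim_set hq (mem_insert p S) y' (hqy ▸ (hf q hq).1) hy'.1
    exact hne (by simpa [f] using hqy)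
  calc S.ncard ≤ (insert p S).ncard := ncard_le_ncard_insert p S
    _ ≤ (S' \ {y'}).ncard :=
      ncard_le_ncard_of_injOn f (fun q hq => ⟨(hf q hq).2, hfy' q hq⟩)
        (fun q hq r hr hqr => hdisj.elim_set hq hr (f q) (hf q hq).1 (hqr ▸ (hf r hr).1))
        hS'.sdiff
    _ < S'.ncard := ncard_sdiff_singleton_lt_of_mem hy'.2 hS'

theorem eventually_pos_map_eval {I E : Type*} [TopologicalSpace I] [FirstCountableTopology I]
    [TopologicalSpace E] [MeasurableSpace E] [OpensMeasurableSpace E] [MeasurableSpace C(I, E)]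
    {η : Measure C(I, E)} (hAE : ∀ t, AEMeasurable (fun γ : C(I, E) => γ t) η)
    {U : Set E} (hU : IsOpen U) {v : I} (hv : 0 < η.map (fun γ : C(I, E) => γ v) U) :
    ∀ᶠ u in 𝓝 v, 0 < η.map (fun γ : C(I, E) => γ u) U := by
  by_contra h
  obtain ⟨u, hu, hu0⟩ := exists_seq_forall_of_frequently (not_eventually.1 h)
  simp only [not_lt, nonpos_iff_eq_zero] at hu0
  have hmass : ∀ t, η.map (fun γ : C(I, E) => γ t) U = ∫⁻ γ, U.indicator 1 (γ t) ∂η := by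
    intro t
    rw [← lintegral_indicator_one hU.measurableSet,
      lintegral_map' (measurable_one.indicator hU.measurableSet).aemeasurable (hAE t)]
  have hlsc : ∀ γ : C(I, E),
      U.indicator 1 (γ v) ≤ liminf (fun k => U.indicator (1 : E → ℝ≥0∞) (γ (u k))) atTop := by
    intro γ
    by_cases hγ : γ v ∈ U
    · refine le_liminf_of_le (by isBoundedDefault) ?_
      filter_upwards [(γ.continuous.tendsto v).comp hu (hU.mem_nhds hγ)] with k hk
      simp [indicator_of_mem hγ, indicator_of_mem (show γ (u k) ∈ U from hk)]
    · simp [indicator_of_notMem hγ]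
  have hzero : η.map (fun γ : C(I, E) => γ v) U ≤ 0 :=
    calc η.map (fun γ : C(I, E) => γ v) U = ∫⁻ γ, U.indicator 1 (γ v) ∂η := hmass v
      _ ≤ ∫⁻ γ, liminf (fun k => U.indicator (1 : E → ℝ≥0∞) (γ (u k))) atTop ∂η :=
        lintegral_mono hlsc
      _ ≤ liminf (fun k => ∫⁻ γ, U.indicator 1 (γ (u k)) ∂η) atTop :=
        lintegral_liminf_le' fun k =>
          (measurable_one.indicator hU.measurableSet).comp_aemeasurable (hAE (u k))
      _ = 0 := by simp [← hmass, hu0]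
  exact hv.not_ge hzero

section Sticky

variable {I E : Type*} [TopologicalSpace I] [MetricSpace E] [SecondCountableTopology E]
  [MeasurableSpace E] [OpensMeasurableSpace E] [MeasurableSpace C(I, E)]
  {μ : I → Measure E} {η : Measure C(I, E)}

theorem eventually_eq_of_eq_of_mem_support [LinearOrder I] [FirstCountableTopology I]
    (hAE : ∀ t, AEMeasurable (fun γ : C(I, E) => γ t) η)
    (hη : ∀ t, η.map (fun γ : C(I, E) => γ t) = μ t) (hfin : ∀ t, (μ t).support.Finite)
    (hmono : ∀ s t, s ≤ t → (μ t).support.ncard ≤ (μ s).support.ncard)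
    {c c' : C(I, E)} {v : I} (hv : c v = c' v) :
    ∀ᶠ u in 𝓝 v, v ≤ u → c u ∈ (μ u).support → c' u ∈ (μ u).support → c u = c' u := by
  obtain ⟨ε, hε, hdisj⟩ := ((hfin v).insert (c v)).exists_pos_pairwiseDisjoint_ball
  have hcover : ∀ᶠ u in 𝓝 v, ∀ q ∈ (μ v).support, (ball q ε ∩ (μ u).support).Nonempty := by
    rw [(hfin v).eventually_all]
    intro q hq
    have hpos : 0 < η.map (fun γ : C(I, E) => γ v) (ball q ε) := by
      rw [hη]
      exact (Measure.mem_support_iff_forall q).1 hq _ (ball_mem_nhds q hε)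
    filter_upwards [eventually_pos_map_eval hAE isOpen_ball hpos] with u hu
    rw [hη] at hu
    exact Measure.nonempty_inter_support_of_pos hu
  have hc : ∀ᶠ u in 𝓝 v, c u ∈ ball (c v) ε :=
    c.continuous.continuousAt (ball_mem_nhds _ hε)
  have hc' : ∀ᶠ u in 𝓝 v, c' u ∈ ball (c v) ε :=
    hv ▸ c'.continuous.continuousAt (ball_mem_nhds _ hε)
  filter_upwards [hcover, hc, hc'] with u hcov hcu hc'u hvu hsu hs'u
  by_contra hne
  exact (hmono v u hvu).not_gt
    (ncard_lt_ncard_of_split (hfin u) hdisj hcov ⟨hcu, hsu⟩ ⟨hc'u, hs'u⟩ hne)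

theorem eq_of_le_of_eq_of_mem_support [ConditionallyCompleteLinearOrder I] [OrderTopology I]
    [DenselyOrdered I] [FirstCountableTopology I]
    (hAE : ∀ t, AEMeasurable (fun γ : C(I, E) => γ t) η)
    (hη : ∀ t, η.map (fun γ : C(I, E) => γ t) = μ t) (hfin : ∀ t, (μ t).support.Finite)
    (hmono : ∀ s t, s ≤ t → (μ t).support.ncard ≤ (μ s).support.ncard)
    {D : Set I} (hD : Dense D) {c c' : C(I, E)} (hc : ∀ u ∈ D, c u ∈ (μ u).support)
    (hc' : ∀ u ∈ D, c' u ∈ (μ u).support) {s t : I} (hst : s ≤ t) (hs : c s = c' s) :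
    c t = c' t := by
  refine IsClosed.mem_of_ge_of_forall_exists_gt (s := {r | c r = c' r})
    ((isClosed_eq c.continuous c'.continuous).inter isClosed_Icc) hs hst ?_
  rintro v ⟨hv, -, hvt⟩
  obtain ⟨w, ⟨hvw, hwt⟩, hw⟩ := exists_Ico_subset_of_mem_nhds'
    (eventually_eq_of_eq_of_mem_support hAE hη hfin hmono hv) hvt
  obtain ⟨u, huD, hvu, huw⟩ := hD.exists_between hvw
  exact ⟨u, hw ⟨hvu.le, huw⟩ hvu.le (hc u huD) (hc' u huD), hvu, huw.le.trans hwt⟩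

end Sticky

theorem exists_eq_sum_dirac_of_injOn {Ω E ι : Type*} [MeasurableSpace Ω] [MeasurableSpace E]
    [MeasurableSingletonClass E] [Fintype ι] {η : Measure Ω} {f : Ω → E}
    (hf : AEMeasurable f η) {G : Set Ω} (hG : ∀ᵐ ω ∂η, ω ∈ G) (hfG : InjOn f G)
    {x : ι → E} (hx : Function.Injective x) {c : ι → ℝ≥0∞} (hc : ∀ i, c i ≠ 0)
    (hmap : η.map f = ∑ i, c i • Measure.dirac (x i)) :
    ∃ γ : ι → Ω, (∀ i, γ i ∈ G ∧ f (γ i) = x i) ∧ η = ∑ i, c i • Measure.dirac (γ i) := by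
  classical
  have hmass : ∀ I : Set ι, η (f ⁻¹' (x '' I)) = ∑ i, c i * I.indicator 1 i := by
    intro I
    rw [← Measure.map_apply_of_aemeasurable hf (I.toFinite.image x).measurableSet, hmap]
    simp [Measure.dirac_apply', (I.toFinite.image x).measurableSet, hx.mem_set_image,
      indicator]
  have hexists : ∀ i, ∃ ω ∈ G, f ω = x i := by
    intro i
    have hi : η (f ⁻¹' {x i}) = c i := by simpa [indicator] using hmass {i}
    obtain ⟨ω, hω, hωG⟩ :=
      ((frequently_ae_mem_iff.2 (hi ▸ hc i)).and_eventually hG).exists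
    exact ⟨ω, hωG, hω⟩
  choose γ hγG hγ using hexists
  refine ⟨γ, fun i => ⟨hγG i, hγ i⟩, ?_⟩
  have hrange : ∀ᵐ ω ∂η, f ω ∈ range x := by
    refine ae_of_ae_map hf (ae_iff.2 ?_)
    rw [hmap]
    simp
  ext T hT
  have hT' : f ⁻¹' (x '' {i | γ i ∈ T}) =ᵐ[η] T := by
    rw [eventuallyEq_set]
    filter_upwards [hG, hrange] with ω hωG ⟨k, hk⟩
    obtain rfl : ω = γ k := hfG hωG (hγG k) (hk ▸ (hγ k).symm)
    simp [hx.mem_set_image, ← hk]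
  rw [← measure_congr hT', hmass]
  simp [Measure.dirac_apply' _ hT, indicator]

theorem stmt12_general (N : ℕ) (a : Fin N → ℝ) (ha : ∀ i, 0 < a i)
    (x : Fin N → X) (hx : Function.Injective x)
    [MeasurableSpace C(Set.Ici (0:ℝ), X)]
    (μ : Set.Ici (0:ℝ) → Measure X) (hμ : ∀ t, MemP2 (μ t))
    (hμ0 : μ ⟨0, Set.self_mem_Ici⟩ = ∑ i, ENNReal.ofReal (a i) • Measure.dirac (x i))
    (hfin : ∀ t, (msupport (μ t)).Finite)
    (hmono : ∀ s t : Set.Ici (0:ℝ), s ≤ t →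
      (msupport (μ t)).ncard ≤ (msupport (μ s)).ncard)
    (η : Measure C(Set.Ici (0:ℝ), X))
    (hη : ∀ t : Set.Ici (0:ℝ), η.map (fun γ : C(Set.Ici (0:ℝ), X) => γ t) = μ t) :
    ∃ γ : Fin N → C(Set.Ici (0:ℝ), X),
      η = ∑ i, ENNReal.ofReal (a i) • Measure.dirac (γ i) ∧
      Function.Injective γ ∧
      (∀ i, γ i ⟨0, Set.self_mem_Ici⟩ = x i) ∧
      (∀ i j, i ≠ j → ∀ s : Set.Ici (0:ℝ), γ i s = γ j s →
        ∀ t : Set.Ici (0:ℝ), s ≤ t → γ i t = γ j t) := by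
  -- makes `Set.Ici 0` a conditionally complete linear order
  have : Inhabited (Set.Ici (0:ℝ)) := ⟨⟨0, Set.self_mem_Ici⟩⟩
  simp only [msupport_eq_support] at hfin hmono
  have hAE : ∀ t, AEMeasurable (fun γ : C(Set.Ici (0:ℝ), X) => γ t) η := fun t =>
    .of_map_ne_zero (by rw [hη t]; exact @IsProbabilityMeasure.ne_zero _ _ _ (hμ t).1)
  obtain ⟨D, hDc, hD⟩ := TopologicalSpace.exists_countable_dense (Set.Ici (0:ℝ))
  set G := {γ : C(Set.Ici (0:ℝ), X) | ∀ u ∈ D, γ u ∈ (μ u).support}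
  have hG : ∀ᵐ γ ∂η, γ ∈ G := (ae_ball_iff hDc).2 fun u _ =>
    ae_of_ae_map (hAE u) ((hη u).symm ▸ Measure.support_mem_ae)
  have hstick : ∀ γ ∈ G, ∀ γ' ∈ G, ∀ s, γ s = γ' s → ∀ t, s ≤ t → γ t = γ' t :=
    fun γ hγ γ' hγ' s hs t hst =>
      eq_of_le_of_eq_of_mem_support hAE hη hfin hmono hD hγ hγ' hst hs
  obtain ⟨γ, hγ, hrep⟩ := exists_eq_sum_dirac_of_injOn (hAE _) hG
    (fun γ hγ γ' hγ' h => ContinuousMap.ext fun t => hstick γ hγ γ' hγ' _ h t t.2) hx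
    (fun i => (ENNReal.ofReal_pos.2 (ha i)).ne') ((hη _).trans hμ0)
  refine ⟨γ, hrep, fun i j h => hx ?_, fun i => (hγ i).2,
    fun i j _ s hs t hst => hstick _ (hγ i).1 _ (hγ j).1 s hs t hst⟩
  rw [← (hγ i).2, ← (hγ j).2, h]

/-- **Sticky particles representation.** Let
`μ̄ = Σ aᵢ δ_{xᵢ}` with `aᵢ > 0`, `Σ aᵢ = 1`, and `xᵢ` pairwise distinct; let
`μ : [0,∞) → P₂(X)` with `μ₀ = μ̄` have finite support of non-increasing
cardinality, and let `η` be a probability measure on `C([0,∞);X)` with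
`(e_t)_♯η = μ_t` for all `t`. Then `η = Σ aᵢ δ_{γᵢ}` for curves `γᵢ` which are
pairwise distinct (P1), start at `xᵢ` (P2), and stick together after meeting (P3). -/
theorem stmt12 (N : ℕ) (hN : 1 ≤ N) (a : Fin N → ℝ) (ha : ∀ i, 0 < a i)
    (hsum : ∑ i, a i = 1) (x : Fin N → X) (hx : Function.Injective x)
    [MeasurableSpace C(Set.Ici (0:ℝ), X)]
    (μ : Set.Ici (0:ℝ) → Measure X) (hμ : ∀ t, MemP2 (μ t))
    (hμ0 : μ ⟨0, Set.self_mem_Ici⟩ = ∑ i, ENNReal.ofReal (a i) • Measure.dirac (x i))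
    (hfin : ∀ t, (msupport (μ t)).Finite)
    (hmono : ∀ s t : Set.Ici (0:ℝ), s ≤ t →
      (msupport (μ t)).ncard ≤ (msupport (μ s)).ncard)
    (η : Measure C(Set.Ici (0:ℝ), X)) [IsProbabilityMeasure η]
    (hη : ∀ t : Set.Ici (0:ℝ), η.map (fun γ : C(Set.Ici (0:ℝ), X) => γ t) = μ t) :
    ∃ γ : Fin N → C(Set.Ici (0:ℝ), X),
      η = ∑ i, ENNReal.ofReal (a i) • Measure.dirac (γ i) ∧
      Function.Injective γ ∧
      (∀ i, γ i ⟨0, Set.self_mem_Ici⟩ = x i) ∧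
      (∀ i j, i ≠ j → ∀ s : Set.Ici (0:ℝ), γ i s = γ j s →
        ∀ t : Set.Ici (0:ℝ), s ≤ t → γ i t = γ j t) :=
  stmt12_general N a ha x hx μ hμ hμ0 hfin hmono η hη
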